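/- In the underlying graph W of the gadget (Figure 2), every induced forest of size 5 containing u contains at least two of the vertices z, t, x_1. -/
import Mathlib

open SimpleGraph

/- Vertices of the underlying graph `W` of the gadget of Figure 2: `0 = u`, `1 = v`, `2 = w`,
`3 = z`, `4 = t`, `5 = x₁`, `6 = x₂`, `7 = x₃`, `8 = x₄`, `9 = x₅`. -/

/-- The edges of `W`: `wxᵢ` for `i = 1..5`; the 5-cycle `x₁x₂x₃x₄x₅`; `zx₂, zx₃, zu, zv`;
`tx₄, tx₅, tu, tv`; `ux₁, ux₂, ux₅, uv`; `vx₃, vx₄`. -/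
def edgesW : Finset (Sym2 (Fin 10)) :=
  {s(2, 5), s(2, 6), s(2, 7), s(2, 8), s(2, 9),
   s(5, 6), s(6, 7), s(7, 8), s(8, 9), s(5, 9),
   s(3, 6), s(3, 7), s(3, 0), s(3, 1),
   s(4, 8), s(4, 9), s(4, 0), s(4, 1),
   s(0, 5), s(0, 6), s(0, 9), s(0, 1),
   s(1, 7), s(1, 8)}

/-- The underlying (unsigned) graph `W` of the gadget of Figure 2. -/
def W : SimpleGraph (Fin 10) := SimpleGraph.fromEdgeSet ↑edgesW

/-- A vertex set induces a forest if the induced subgraph contains no cycle. -/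
def InducedForest (S : Set (Fin 10)) : Prop :=
  ¬ ∃ (v : Fin 10) (c : W.Walk v v), c.IsCycle ∧ ∀ x ∈ c.support, x ∈ S

lemma adjW {a b : Fin 10} (h : s(a, b) ∈ edgesW) (hne : a ≠ b) : W.Adj a b := by
  rw [W, SimpleGraph.fromEdgeSet_adj]; exact ⟨h, hne⟩

def cyc0 : W.Walk 0 0 := Walk.cons (adjW (a := 0) (b := 1) (by decide) (by decide)) (Walk.cons (adjW (a := 1) (b := 3) (by decide) (by decide)) (Walk.cons (adjW (a := 3) (b := 0) (by decide) (by decide)) (Walk.nil)))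

lemma cyc0_isCycle : cyc0.IsCycle := by
  rw [Walk.isCycle_def, Walk.isTrail_def]
  refine ⟨?_, by simp [cyc0], ?_⟩ <;> simp [cyc0]

def cyc1 : W.Walk 0 0 := Walk.cons (adjW (a := 0) (b := 1) (by decide) (by decide)) (Walk.cons (adjW (a := 1) (b := 4) (by decide) (by decide)) (Walk.cons (adjW (a := 4) (b := 0) (by decide) (by decide)) (Walk.nil)))

lemma cyc1_isCycle : cyc1.IsCycle := by
  rw [Walk.isCycle_def, Walk.isTrail_def]
  refine ⟨?_, by simp [cyc1], ?_⟩ <;> simp [cyc1]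

def cyc2 : W.Walk 0 0 := Walk.cons (adjW (a := 0) (b := 1) (by decide) (by decide)) (Walk.cons (adjW (a := 1) (b := 7) (by decide) (by decide)) (Walk.cons (adjW (a := 7) (b := 2) (by decide) (by decide)) (Walk.cons (adjW (a := 2) (b := 5) (by decide) (by decide)) (Walk.cons (adjW (a := 5) (b := 0) (by decide) (by decide)) (Walk.nil)))))

lemma cyc2_isCycle : cyc2.IsCycle := by
  rw [Walk.isCycle_def, Walk.isTrail_def]
  refine ⟨?_, by simp [cyc2], ?_⟩ <;> simp [cyc2]

def cyc3 : W.Walk 0 0 := Walk.cons (adjW (a := 0) (b := 1) (by decide) (by decide)) (Walk.cons (adjW (a := 1) (b := 7) (by decide) (by decide)) (Walk.cons (adjW (a := 7) (b := 2) (by decide) (by decide)) (Walk.cons (adjW (a := 2) (b := 9) (by decide) (by decide)) (Walk.cons (adjW (a := 9) (b := 0) (by decide) (by decide)) (Walk.nil)))))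

lemma cyc3_isCycle : cyc3.IsCycle := by
  rw [Walk.isCycle_def, Walk.isTrail_def]
  refine ⟨?_, by simp [cyc3], ?_⟩ <;> simp [cyc3]

def cyc4 : W.Walk 0 0 := Walk.cons (adjW (a := 0) (b := 1) (by decide) (by decide)) (Walk.cons (adjW (a := 1) (b := 7) (by decide) (by decide)) (Walk.cons (adjW (a := 7) (b := 6) (by decide) (by decide)) (Walk.cons (adjW (a := 6) (b := 0) (by decide) (by decide)) (Walk.nil))))

lemma cyc4_isCycle : cyc4.IsCycle := by
  rw [Walk.isCycle_def, Walk.isTrail_def]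
  refine ⟨?_, by simp [cyc4], ?_⟩ <;> simp [cyc4]

def cyc5 : W.Walk 0 0 := Walk.cons (adjW (a := 0) (b := 1) (by decide) (by decide)) (Walk.cons (adjW (a := 1) (b := 8) (by decide) (by decide)) (Walk.cons (adjW (a := 8) (b := 2) (by decide) (by decide)) (Walk.cons (adjW (a := 2) (b := 5) (by decide) (by decide)) (Walk.cons (adjW (a := 5) (b := 0) (by decide) (by decide)) (Walk.nil)))))

lemma cyc5_isCycle : cyc5.IsCycle := by
  rw [Walk.isCycle_def, Walk.isTrail_def]
  refine ⟨?_, by simp [cyc5], ?_⟩ <;> simp [cyc5]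

def cyc6 : W.Walk 0 0 := Walk.cons (adjW (a := 0) (b := 1) (by decide) (by decide)) (Walk.cons (adjW (a := 1) (b := 8) (by decide) (by decide)) (Walk.cons (adjW (a := 8) (b := 2) (by decide) (by decide)) (Walk.cons (adjW (a := 2) (b := 6) (by decide) (by decide)) (Walk.cons (adjW (a := 6) (b := 0) (by decide) (by decide)) (Walk.nil)))))

lemma cyc6_isCycle : cyc6.IsCycle := by
  rw [Walk.isCycle_def, Walk.isTrail_def]
  refine ⟨?_, by simp [cyc6], ?_⟩ <;> simp [cyc6]

def cyc7 : W.Walk 0 0 := Walk.cons (adjW (a := 0) (b := 1) (by decide) (by decide)) (Walk.cons (adjW (a := 1) (b := 8) (by decide) (by decide)) (Walk.cons (adjW (a := 8) (b := 9) (by decide) (by decide)) (Walk.cons (adjW (a := 9) (b := 0) (by decide) (by decide)) (Walk.nil))))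

lemma cyc7_isCycle : cyc7.IsCycle := by
  rw [Walk.isCycle_def, Walk.isTrail_def]
  refine ⟨?_, by simp [cyc7], ?_⟩ <;> simp [cyc7]

def cyc8 : W.Walk 0 0 := Walk.cons (adjW (a := 0) (b := 3) (by decide) (by decide)) (Walk.cons (adjW (a := 3) (b := 6) (by decide) (by decide)) (Walk.cons (adjW (a := 6) (b := 0) (by decide) (by decide)) (Walk.nil)))

lemma cyc8_isCycle : cyc8.IsCycle := by
  rw [Walk.isCycle_def, Walk.isTrail_def]
  refine ⟨?_, by simp [cyc8], ?_⟩ <;> simp [cyc8]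

def cyc9 : W.Walk 0 0 := Walk.cons (adjW (a := 0) (b := 3) (by decide) (by decide)) (Walk.cons (adjW (a := 3) (b := 7) (by decide) (by decide)) (Walk.cons (adjW (a := 7) (b := 2) (by decide) (by decide)) (Walk.cons (adjW (a := 2) (b := 9) (by decide) (by decide)) (Walk.cons (adjW (a := 9) (b := 0) (by decide) (by decide)) (Walk.nil)))))

lemma cyc9_isCycle : cyc9.IsCycle := by
  rw [Walk.isCycle_def, Walk.isTrail_def]
  refine ⟨?_, by simp [cyc9], ?_⟩ <;> simp [cyc9]

def cyc10 : W.Walk 0 0 := Walk.cons (adjW (a := 0) (b := 3) (by decide) (by decide)) (Walk.cons (adjW (a := 3) (b := 7) (by decide) (by decide)) (Walk.cons (adjW (a := 7) (b := 8) (by decide) (by decide)) (Walk.cons (adjW (a := 8) (b := 9) (by decide) (by decide)) (Walk.cons (adjW (a := 9) (b := 0) (by decide) (by decide)) (Walk.nil)))))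

lemma cyc10_isCycle : cyc10.IsCycle := by
  rw [Walk.isCycle_def, Walk.isTrail_def]
  refine ⟨?_, by simp [cyc10], ?_⟩ <;> simp [cyc10]

def cyc11 : W.Walk 0 0 := Walk.cons (adjW (a := 0) (b := 4) (by decide) (by decide)) (Walk.cons (adjW (a := 4) (b := 8) (by decide) (by decide)) (Walk.cons (adjW (a := 8) (b := 2) (by decide) (by decide)) (Walk.cons (adjW (a := 2) (b := 6) (by decide) (by decide)) (Walk.cons (adjW (a := 6) (b := 0) (by decide) (by decide)) (Walk.nil)))))

lemma cyc11_isCycle : cyc11.IsCycle := by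
  rw [Walk.isCycle_def, Walk.isTrail_def]
  refine ⟨?_, by simp [cyc11], ?_⟩ <;> simp [cyc11]

def cyc12 : W.Walk 0 0 := Walk.cons (adjW (a := 0) (b := 4) (by decide) (by decide)) (Walk.cons (adjW (a := 4) (b := 8) (by decide) (by decide)) (Walk.cons (adjW (a := 8) (b := 7) (by decide) (by decide)) (Walk.cons (adjW (a := 7) (b := 6) (by decide) (by decide)) (Walk.cons (adjW (a := 6) (b := 0) (by decide) (by decide)) (Walk.nil)))))

lemma cyc12_isCycle : cyc12.IsCycle := by
  rw [Walk.isCycle_def, Walk.isTrail_def]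
  refine ⟨?_, by simp [cyc12], ?_⟩ <;> simp [cyc12]

def cyc13 : W.Walk 0 0 := Walk.cons (adjW (a := 0) (b := 4) (by decide) (by decide)) (Walk.cons (adjW (a := 4) (b := 9) (by decide) (by decide)) (Walk.cons (adjW (a := 9) (b := 0) (by decide) (by decide)) (Walk.nil)))

lemma cyc13_isCycle : cyc13.IsCycle := by
  rw [Walk.isCycle_def, Walk.isTrail_def]
  refine ⟨?_, by simp [cyc13], ?_⟩ <;> simp [cyc13]

def cyc14 : W.Walk 0 0 := Walk.cons (adjW (a := 0) (b := 5) (by decide) (by decide)) (Walk.cons (adjW (a := 5) (b := 6) (by decide) (by decide)) (Walk.cons (adjW (a := 6) (b := 0) (by decide) (by decide)) (Walk.nil)))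

lemma cyc14_isCycle : cyc14.IsCycle := by
  rw [Walk.isCycle_def, Walk.isTrail_def]
  refine ⟨?_, by simp [cyc14], ?_⟩ <;> simp [cyc14]

def cyc15 : W.Walk 0 0 := Walk.cons (adjW (a := 0) (b := 5) (by decide) (by decide)) (Walk.cons (adjW (a := 5) (b := 9) (by decide) (by decide)) (Walk.cons (adjW (a := 9) (b := 0) (by decide) (by decide)) (Walk.nil)))

lemma cyc15_isCycle : cyc15.IsCycle := by
  rw [Walk.isCycle_def, Walk.isTrail_def]
  refine ⟨?_, by simp [cyc15], ?_⟩ <;> simp [cyc15]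

def cyc16 : W.Walk 0 0 := Walk.cons (adjW (a := 0) (b := 6) (by decide) (by decide)) (Walk.cons (adjW (a := 6) (b := 2) (by decide) (by decide)) (Walk.cons (adjW (a := 2) (b := 9) (by decide) (by decide)) (Walk.cons (adjW (a := 9) (b := 0) (by decide) (by decide)) (Walk.nil))))

lemma cyc16_isCycle : cyc16.IsCycle := by
  rw [Walk.isCycle_def, Walk.isTrail_def]
  refine ⟨?_, by simp [cyc16], ?_⟩ <;> simp [cyc16]

def cyc17 : W.Walk 0 0 := Walk.cons (adjW (a := 0) (b := 6) (by decide) (by decide)) (Walk.cons (adjW (a := 6) (b := 7) (by decide) (by decide)) (Walk.cons (adjW (a := 7) (b := 8) (by decide) (by decide)) (Walk.cons (adjW (a := 8) (b := 9) (by decide) (by decide)) (Walk.cons (adjW (a := 9) (b := 0) (by decide) (by decide)) (Walk.nil)))))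

lemma cyc17_isCycle : cyc17.IsCycle := by
  rw [Walk.isCycle_def, Walk.isTrail_def]
  refine ⟨?_, by simp [cyc17], ?_⟩ <;> simp [cyc17]

def cyc18 : W.Walk 1 1 := Walk.cons (adjW (a := 1) (b := 7) (by decide) (by decide)) (Walk.cons (adjW (a := 7) (b := 8) (by decide) (by decide)) (Walk.cons (adjW (a := 8) (b := 1) (by decide) (by decide)) (Walk.nil)))

lemma cyc18_isCycle : cyc18.IsCycle := by
  rw [Walk.isCycle_def, Walk.isTrail_def]
  refine ⟨?_, by simp [cyc18], ?_⟩ <;> simp [cyc18]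

def cyc19 : W.Walk 2 2 := Walk.cons (adjW (a := 2) (b := 6) (by decide) (by decide)) (Walk.cons (adjW (a := 6) (b := 7) (by decide) (by decide)) (Walk.cons (adjW (a := 7) (b := 2) (by decide) (by decide)) (Walk.nil)))

lemma cyc19_isCycle : cyc19.IsCycle := by
  rw [Walk.isCycle_def, Walk.isTrail_def]
  refine ⟨?_, by simp [cyc19], ?_⟩ <;> simp [cyc19]

def cyc20 : W.Walk 2 2 := Walk.cons (adjW (a := 2) (b := 7) (by decide) (by decide)) (Walk.cons (adjW (a := 7) (b := 8) (by decide) (by decide)) (Walk.cons (adjW (a := 8) (b := 2) (by decide) (by decide)) (Walk.nil)))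

lemma cyc20_isCycle : cyc20.IsCycle := by
  rw [Walk.isCycle_def, Walk.isTrail_def]
  refine ⟨?_, by simp [cyc20], ?_⟩ <;> simp [cyc20]

def cyc21 : W.Walk 2 2 := Walk.cons (adjW (a := 2) (b := 8) (by decide) (by decide)) (Walk.cons (adjW (a := 8) (b := 9) (by decide) (by decide)) (Walk.cons (adjW (a := 9) (b := 2) (by decide) (by decide)) (Walk.nil)))

lemma cyc21_isCycle : cyc21.IsCycle := by
  rw [Walk.isCycle_def, Walk.isTrail_def]
  refine ⟨?_, by simp [cyc21], ?_⟩ <;> simp [cyc21]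

set_option maxRecDepth 10000 in
set_option synthInstance.maxSize 5000 in
set_option synthInstance.maxHeartbeats 1000000 in
set_option maxHeartbeats 1000000 in
lemma keyB : ∀ a0 a1 a2 a3 a4 a5 a6 a7 a8 a9 : Bool, a0.toNat + a1.toNat + a2.toNat + a3.toNat + a4.toNat + a5.toNat + a6.toNat + a7.toNat + a8.toNat + a9.toNat = 5 → a0 = true →
    a3.toNat + a4.toNat + a5.toNat ≤ 1 → (a0 && a1 && a3) = true ∨ (a0 && a1 && a4) = true ∨ (a0 && a1 && a7 && a2 && a5) = true ∨ (a0 && a1 && a7 && a2 && a9) = true ∨ (a0 && a1 && a7 && a6) = true ∨ (a0 && a1 && a8 && a2 && a5) = true ∨ (a0 && a1 && a8 && a2 && a6) = true ∨ (a0 && a1 && a8 && a9) = true ∨ (a0 && a3 && a6) = true ∨ (a0 && a3 && a7 && a2 && a9) = true ∨ (a0 && a3 && a7 && a8 && a9) = true ∨ (a0 && a4 && a8 && a2 && a6) = true ∨ (a0 && a4 && a8 && a7 && a6) = true ∨ (a0 && a4 && a9) = true ∨ (a0 && a5 && a6) = true ∨ (a0 && a5 && a9) = true ∨ (a0 &&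 a6 && a2 && a9) = true ∨ (a0 && a6 && a7 && a8 && a9) = true ∨ (a1 && a7 && a8) = true ∨ (a2 && a6 && a7) = true ∨ (a2 && a7 && a8) = true ∨ (a2 && a8 && a9) = true := by decide

lemma sum_univ_ten' {M : Type*} [AddCommMonoid M] (f : Fin 10 → M) :
    ∑ i, f i = f 0 + f 1 + f 2 + f 3 + f 4 + f 5 + f 6 + f 7 + f 8 + f 9 := by
  rw [Fin.sum_univ_castSucc, Fin.sum_univ_castSucc, Fin.sum_univ_eight]
  rfl

lemma ite_toNat (S : Finset (Fin 10)) (i : Fin 10) :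
    (if i ∈ S then 1 else 0) = (decide (i ∈ S)).toNat := by
  by_cases h : i ∈ S <;> simp [h]

/-- Every induced forest of `W` of size 5 containing `u` contains at least two of the
vertices `z`, `t`, `x₁`. -/
theorem stmt17 (S : Finset (Fin 10)) (h : InducedForest ↑S)
    (hcard : S.card = 5) (hu : (0 : Fin 10) ∈ S) :
    2 ≤ (S ∩ {3, 4, 5}).card := by
  by_contra hlt
  push_neg at hlt
  set d : Fin 10 → Bool := fun i => decide (i ∈ S) with hd
  have hsum : (d 0).toNat + (d 1).toNat + (d 2).toNat + (d 3).toNat + (d 4).toNat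
      + (d 5).toNat + (d 6).toNat + (d 7).toNat + (d 8).toNat + (d 9).toNat = 5 := by
    have h1 : S = Finset.univ.filter (· ∈ S) := by simp
    rw [h1, Finset.card_filter, sum_univ_ten'] at hcard
    simpa only [ite_toNat] using hcard
  have hinter : (S ∩ {3, 4, 5}).card = (d 3).toNat + (d 4).toNat + (d 5).toNat := by
    have h2 : S ∩ ({3, 4, 5} : Finset (Fin 10)) =
        ({3, 4, 5} : Finset (Fin 10)).filter (· ∈ S) := by
      rw [Finset.filter_mem_eq_inter, Finset.inter_comm]
    rw [h2, Finset.card_filter]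
    rw [show ({3, 4, 5} : Finset (Fin 10)) = insert 3 (insert 4 {5}) from rfl]
    rw [Finset.sum_insert (by decide), Finset.sum_insert (by decide), Finset.sum_singleton]
    simp only [ite_toNat, hd]
    omega
  have h3 : (d 3).toNat + (d 4).toNat + (d 5).toNat ≤ 1 := by omega
  have h0 : d 0 = true := by simpa [hd] using hu
  have hk := keyB (d 0) (d 1) (d 2) (d 3) (d 4) (d 5) (d 6) (d 7) (d 8) (d 9) hsum h0 h3
  have mem : ∀ i : Fin 10, d i = true → i ∈ S := fun i hi => by simpa [hd] using hi

  rcases hk with hk|hk|hk|hk|hk|hk|hk|hk|hk|hk|hk|hk|hk|hk|hk|hk|hk|hk|hk|hk|hk|hk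

  · simp only [Bool.and_eq_true] at hk
    obtain ⟨⟨m0, m1⟩, m3⟩ := hk
    refine h ⟨0, cyc0, cyc0_isCycle, ?_⟩
    intro x hx
    simp [cyc0] at hx
    rcases hx with rfl|rfl|rfl|rfl <;> exact mem _ (by assumption)
  · simp only [Bool.and_eq_true] at hk
    obtain ⟨⟨m0, m1⟩, m4⟩ := hk
    refine h ⟨0, cyc1, cyc1_isCycle, ?_⟩
    intro x hx
    simp [cyc1] at hx
    rcases hx with rfl|rfl|rfl|rfl <;> exact mem _ (by assumption)
  · simp only [Bool.and_eq_true] at hk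
    obtain ⟨⟨⟨⟨m0, m1⟩, m7⟩, m2⟩, m5⟩ := hk
    refine h ⟨0, cyc2, cyc2_isCycle, ?_⟩
    intro x hx
    simp [cyc2] at hx
    rcases hx with rfl|rfl|rfl|rfl|rfl|rfl <;> exact mem _ (by assumption)
  · simp only [Bool.and_eq_true] at hk
    obtain ⟨⟨⟨⟨m0, m1⟩, m7⟩, m2⟩, m9⟩ := hk
    refine h ⟨0, cyc3, cyc3_isCycle, ?_⟩
    intro x hx
    simp [cyc3] at hx
    rcases hx with rfl|rfl|rfl|rfl|rfl|rfl <;> exact mem _ (by assumption)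
  · simp only [Bool.and_eq_true] at hk
    obtain ⟨⟨⟨m0, m1⟩, m7⟩, m6⟩ := hk
    refine h ⟨0, cyc4, cyc4_isCycle, ?_⟩
    intro x hx
    simp [cyc4] at hx
    rcases hx with rfl|rfl|rfl|rfl|rfl <;> exact mem _ (by assumption)
  · simp only [Bool.and_eq_true] at hk
    obtain ⟨⟨⟨⟨m0, m1⟩, m8⟩, m2⟩, m5⟩ := hk
    refine h ⟨0, cyc5, cyc5_isCycle, ?_⟩
    intro x hx
    simp [cyc5] at hx
    rcases hx with rfl|rfl|rfl|rfl|rfl|rfl <;> exact mem _ (by assumption)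
  · simp only [Bool.and_eq_true] at hk
    obtain ⟨⟨⟨⟨m0, m1⟩, m8⟩, m2⟩, m6⟩ := hk
    refine h ⟨0, cyc6, cyc6_isCycle, ?_⟩
    intro x hx
    simp [cyc6] at hx
    rcases hx with rfl|rfl|rfl|rfl|rfl|rfl <;> exact mem _ (by assumption)
  · simp only [Bool.and_eq_true] at hk
    obtain ⟨⟨⟨m0, m1⟩, m8⟩, m9⟩ := hk
    refine h ⟨0, cyc7, cyc7_isCycle, ?_⟩
    intro x hx
    simp [cyc7] at hx
    rcases hx with rfl|rfl|rfl|rfl|rfl <;> exact mem _ (by assumption)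
  · simp only [Bool.and_eq_true] at hk
    obtain ⟨⟨m0, m3⟩, m6⟩ := hk
    refine h ⟨0, cyc8, cyc8_isCycle, ?_⟩
    intro x hx
    simp [cyc8] at hx
    rcases hx with rfl|rfl|rfl|rfl <;> exact mem _ (by assumption)
  · simp only [Bool.and_eq_true] at hk
    obtain ⟨⟨⟨⟨m0, m3⟩, m7⟩, m2⟩, m9⟩ := hk
    refine h ⟨0, cyc9, cyc9_isCycle, ?_⟩
    intro x hx
    simp [cyc9] at hx
    rcases hx with rfl|rfl|rfl|rfl|rfl|rfl <;> exact mem _ (by assumption)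
  · simp only [Bool.and_eq_true] at hk
    obtain ⟨⟨⟨⟨m0, m3⟩, m7⟩, m8⟩, m9⟩ := hk
    refine h ⟨0, cyc10, cyc10_isCycle, ?_⟩
    intro x hx
    simp [cyc10] at hx
    rcases hx with rfl|rfl|rfl|rfl|rfl|rfl <;> exact mem _ (by assumption)
  · simp only [Bool.and_eq_true] at hk
    obtain ⟨⟨⟨⟨m0, m4⟩, m8⟩, m2⟩, m6⟩ := hk
    refine h ⟨0, cyc11, cyc11_isCycle, ?_⟩
    intro x hx
    simp [cyc11] at hx
    rcases hx with rfl|rfl|rfl|rfl|rfl|rfl <;> exact mem _ (by assumption)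
  · simp only [Bool.and_eq_true] at hk
    obtain ⟨⟨⟨⟨m0, m4⟩, m8⟩, m7⟩, m6⟩ := hk
    refine h ⟨0, cyc12, cyc12_isCycle, ?_⟩
    intro x hx
    simp [cyc12] at hx
    rcases hx with rfl|rfl|rfl|rfl|rfl|rfl <;> exact mem _ (by assumption)
  · simp only [Bool.and_eq_true] at hk
    obtain ⟨⟨m0, m4⟩, m9⟩ := hk
    refine h ⟨0, cyc13, cyc13_isCycle, ?_⟩
    intro x hx
    simp [cyc13] at hx
    rcases hx with rfl|rfl|rfl|rfl <;> exact mem _ (by assumption)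
  · simp only [Bool.and_eq_true] at hk
    obtain ⟨⟨m0, m5⟩, m6⟩ := hk
    refine h ⟨0, cyc14, cyc14_isCycle, ?_⟩
    intro x hx
    simp [cyc14] at hx
    rcases hx with rfl|rfl|rfl|rfl <;> exact mem _ (by assumption)
  · simp only [Bool.and_eq_true] at hk
    obtain ⟨⟨m0, m5⟩, m9⟩ := hk
    refine h ⟨0, cyc15, cyc15_isCycle, ?_⟩
    intro x hx
    simp [cyc15] at hx
    rcases hx with rfl|rfl|rfl|rfl <;> exact mem _ (by assumption)
  · simp only [Bool.and_eq_true] at hk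
    obtain ⟨⟨⟨m0, m6⟩, m2⟩, m9⟩ := hk
    refine h ⟨0, cyc16, cyc16_isCycle, ?_⟩
    intro x hx
    simp [cyc16] at hx
    rcases hx with rfl|rfl|rfl|rfl|rfl <;> exact mem _ (by assumption)
  · simp only [Bool.and_eq_true] at hk
    obtain ⟨⟨⟨⟨m0, m6⟩, m7⟩, m8⟩, m9⟩ := hk
    refine h ⟨0, cyc17, cyc17_isCycle, ?_⟩
    intro x hx
    simp [cyc17] at hx
    rcases hx with rfl|rfl|rfl|rfl|rfl|rfl <;> exact mem _ (by assumption)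
  · simp only [Bool.and_eq_true] at hk
    obtain ⟨⟨m1, m7⟩, m8⟩ := hk
    refine h ⟨1, cyc18, cyc18_isCycle, ?_⟩
    intro x hx
    simp [cyc18] at hx
    rcases hx with rfl|rfl|rfl|rfl <;> exact mem _ (by assumption)
  · simp only [Bool.and_eq_true] at hk
    obtain ⟨⟨m2, m6⟩, m7⟩ := hk
    refine h ⟨2, cyc19, cyc19_isCycle, ?_⟩
    intro x hx
    simp [cyc19] at hx
    rcases hx with rfl|rfl|rfl|rfl <;> exact mem _ (by assumption)
  · simp only [Bool.and_eq_true] at hk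
    obtain ⟨⟨m2, m7⟩, m8⟩ := hk
    refine h ⟨2, cyc20, cyc20_isCycle, ?_⟩
    intro x hx
    simp [cyc20] at hx
    rcases hx with rfl|rfl|rfl|rfl <;> exact mem _ (by assumption)
  · simp only [Bool.and_eq_true] at hk
    obtain ⟨⟨m2, m8⟩, m9⟩ := hk
    refine h ⟨2, cyc21, cyc21_isCycle, ?_⟩
    intro x hx
    simp [cyc21] at hx
    rcases hx with rfl|rfl|rfl|rfl <;> exact mem _ (by assumption)
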